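/- Let g be a ground truth and p, q predictions of length n, and let α, β be as specified. Suppose N ∈ I_0(g), p(i) = q(i) for all i ∉ N, and |I_1(p_N)| < |I_1(q_N)|. Then LARM(g,p) > LARM(g,q). (LARM satisfies the Minimizing False Alarms property.) -/
import Mathlib


namespace TSAD

open Finset

/-- The index domain `{1, …, n}`. -/
def dom (n : ℕ) : Finset ℕ := Finset.Icc 1 n

/-- The interval `[l, u]` represented by a pair. -/
def ivl (W : ℕ × ℕ) : Finset ℕ := Finset.Icc W.1 W.2

/-- The positions in `A` where the binary sequence `s` takes the value `1` (`true`). -/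
def ones (A : Finset ℕ) (s : ℕ → Bool) : Finset ℕ := A.filter (fun i => s i = true)

/-- `runs A s v` is the set of maximal intervals `[l, u] ⊆ A` on which `s` is constantly `v`
(maximal among intervals contained in `A`).  For `A = dom n` this is `I_v(s)`;
for `A ⊆ dom n` it is `I_v(s_A)`. -/
def runs (A : Finset ℕ) (s : ℕ → Bool) (v : Bool) : Finset (ℕ × ℕ) :=
  (A ×ˢ A).filter (fun W =>
    W.1 ≤ W.2 ∧ ivl W ⊆ A ∧ (∀ i ∈ ivl W, s i = v) ∧
    (W.1 - 1 ∈ A → s (W.1 - 1) ≠ v) ∧ (W.2 + 1 ∈ A → s (W.2 + 1) ≠ v))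

/-- Specification of the function `α` used in the (A)LARM scores: it assigns to each
restriction `p_A` a value in `[0,1)`, depends only on the restriction, strictly increases
when a single `0` of `p_A` is changed to a `1`, satisfies alarm timing, and early bias. -/
structure AlphaSpec (α : Finset ℕ → (ℕ → Bool) → ℝ) : Prop where
  mem_Ico : ∀ A p, α A p ∈ Set.Ico (0 : ℝ) 1
  restrict : ∀ A (p q : ℕ → Bool), (∀ i ∈ A, p i = q i) → α A p = α A q
  mono : ∀ A (p q : ℕ → Bool) (i : ℕ), i ∈ A → p i = true → q i = false →
    (∀ j, j ≠ i → p j = q j) → α A q < α A p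
  timing : ∀ A (p q : ℕ → Bool), (ones A p).card = (ones A q).card →
    ∀ (hp : (ones A p).Nonempty) (hq : (ones A q).Nonempty),
      (ones A p).min' hp < (ones A q).min' hq → α A q < α A p
  earlyBias : ∀ A (p q : ℕ → Bool) (i j : ℕ), i ∈ A → j ∈ A → i < j →
    p i = true → p j = false → q i = false → q j = true →
    (∀ k, k ≠ i → k ≠ j → p k = q k) → α A q < α A p

/-- Specification of the function `β` used in the (A)LARM scores: strictly increasing
with values in `[0,1]`. -/
structure BetaSpec (β : ℕ → ℝ) : Prop where
  mem_Icc : ∀ k, β k ∈ Set.Icc (0 : ℝ) 1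
  strictMono : StrictMono β

/-- The LARM score. -/
noncomputable def LARM (n : ℕ) (α : Finset ℕ → (ℕ → Bool) → ℝ) (β : ℕ → ℝ)
    (g p : ℕ → Bool) : ℝ :=
  (1 / ((runs (dom n) g true).card : ℝ)) *
    ∑ A ∈ (runs (dom n) g true).filter (fun A => 0 < (runs (ivl A) p true).card),
      (α (ivl A) p + 1) / 2 ^ ((runs (ivl A) p true).card)
  - 2 * ∑ N ∈ runs (dom n) g false, ((runs (ivl N) p true).card : ℝ)
  - ∑ N ∈ runs (dom n) g false, β ((ones (ivl N) p).card)

/-- `I_{01}(g)`: intervals that are a maximal `0`-run immediately followed by a maximal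
`1`-run. -/
def runs01 (n : ℕ) (g : ℕ → Bool) : Finset (ℕ × ℕ) :=
  ((dom n) ×ˢ (dom n)).filter (fun W =>
    ∃ b ∈ Finset.Ico W.1 W.2,
      (W.1, b) ∈ runs (dom n) g false ∧ (b + 1, W.2) ∈ runs (dom n) g true)

/-- `I_{10}(g)`: intervals that are a maximal `1`-run immediately followed by a maximal
`0`-run. -/
def runs10 (n : ℕ) (g : ℕ → Bool) : Finset (ℕ × ℕ) :=
  ((dom n) ×ˢ (dom n)).filter (fun W =>
    ∃ b ∈ Finset.Ico W.1 W.2,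
      (W.1, b) ∈ runs (dom n) g true ∧ (b + 1, W.2) ∈ runs (dom n) g false)

/-- Early alarms `EA(p,g)`. -/
def EA (n : ℕ) (p g : ℕ → Bool) : Finset (ℕ × ℕ) :=
  ((dom n) ×ˢ (dom n)).filter (fun A =>
    (∃ I ∈ runs01 n g, A ∈ runs (ivl I) p true) ∧
    (∃ i ∈ ivl A, g i = true) ∧ (∃ i ∈ ivl A, g i = false))

/-- Late alarms `LA(p,g)`. -/
def LA (n : ℕ) (p g : ℕ → Bool) : Finset (ℕ × ℕ) :=
  ((dom n) ×ˢ (dom n)).filter (fun A =>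
    (∃ I ∈ runs10 n g, A ∈ runs (ivl I) p true) ∧
    (∃ i ∈ ivl A, g i = true) ∧ (∃ i ∈ ivl A, g i = false))

/-- True false alarms `TA(p,g)`. -/
def TA (n : ℕ) (p g : ℕ → Bool) : Finset (ℕ × ℕ) :=
  (runs (dom n) p true).filter (fun A =>
    (∀ i ∈ ivl A, g i = false) ∧
    ∀ B ∈ EA n p g ∪ LA n p g, ¬ ivl A ⊆ ivl B)

/-- Detected anomalies `DA(p,g)`. -/
def DA (n : ℕ) (p g : ℕ → Bool) : Finset (ℕ × ℕ) :=
  (runs (dom n) g true).filter (fun A =>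
    ∃ B ∈ runs (dom n) p true,
      (ivl B ∩ ivl A).Nonempty ∧
      (B.1 ∈ ivl A ∨ ∀ i ∈ Finset.Ico B.1 A.1, g i = false))

/-- The ALARM score with alarm tolerance `t` (the averaged term is `0` when
`DA(p,g) = ∅`, since in Lean `0 / 0 = 0`). -/
noncomputable def ALARM (n t : ℕ) (α : Finset ℕ → (ℕ → Bool) → ℝ) (β : ℕ → ℝ)
    (g p : ℕ → Bool) : ℝ :=
  ((DA n p g).card : ℝ)
  + (∑ A ∈ DA n p g, (α (ivl A) p + 1) / 2 ^ ((runs (ivl A) p true).card)) /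
      ((DA n p g).card : ℝ)
  - β (((dom n).filter (fun i => p i = true ∧ g i = false)).card)
  - (1 / (t : ℝ)) * (((TA n p g).card : ℝ) + (3 / 2) * ((EA n p g).card : ℝ)
      + (1 / 2) * ((LA n p g).card : ℝ))

/-- Point-wise Recall. -/
noncomputable def recallPW (n : ℕ) (g p : ℕ → Bool) : ℝ :=
  (((dom n).filter (fun i => p i = true ∧ g i = true)).card : ℝ) /
    ((ones (dom n) g).card : ℝ)

/-- Point-wise F1-score. -/
noncomputable def f1PW (n : ℕ) (g p : ℕ → Bool) : ℝ :=
  2 * (((dom n).filter (fun i => p i = true ∧ g i = true)).card : ℝ) /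
    (((ones (dom n) p).card : ℝ) + ((ones (dom n) g).card : ℝ))

/-- Total length of the ground-truth anomaly windows hit by `p`. -/
def Spa (n : ℕ) (g p : ℕ → Bool) : ℕ :=
  ∑ W ∈ (runs (dom n) g true).filter (fun W => ∃ i ∈ ivl W, p i = true), (ivl W).card

/-- Point-adjusted Recall. -/
noncomputable def recallPA (n : ℕ) (g p : ℕ → Bool) : ℝ :=
  ((Spa n g p : ℝ)) / ((ones (dom n) g).card : ℝ)

/-- Point-adjusted F1-score. -/
noncomputable def f1PA (n : ℕ) (g p : ℕ → Bool) : ℝ :=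
  2 * (Spa n g p : ℝ) /
    ((Spa n g p : ℝ) + (((dom n).filter (fun i => p i = true ∧ g i = false)).card : ℝ)
      + ((ones (dom n) g).card : ℝ))

/-- Point-wise Precision. -/
noncomputable def precisionPW (n : ℕ) (g p : ℕ → Bool) : ℝ :=
  (((dom n).filter (fun i => p i = true ∧ g i = true)).card : ℝ) /
    ((ones (dom n) p).card : ℝ)

/-- Event-wise Recall. -/
noncomputable def recallEvent (n : ℕ) (g p : ℕ → Bool) : ℝ :=
  (((runs (dom n) g true).filter (fun W => ∃ i ∈ ivl W, p i = true)).card : ℝ) /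
    ((runs (dom n) g true).card : ℝ)

/-- Composite F1-score. -/
noncomputable def Fc1 (n : ℕ) (g p : ℕ → Bool) : ℝ :=
  2 * precisionPW n g p * recallEvent n g p / (precisionPW n g p + recallEvent n g p)

/-- Distance from `i` to the closest element of `S`. -/
noncomputable def minDist (i : ℕ) (S : Finset ℕ) : ℕ :=
  sInf {d : ℕ | ∃ j ∈ S, d = ((i : ℤ) - (j : ℤ)).natAbs}

/-- Temporal Distance. -/
noncomputable def TD (n : ℕ) (g p : ℕ → Bool) : ℕ :=
  ∑ i ∈ ones (dom n) g, minDist i (ones (dom n) p)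
  + ∑ i ∈ ones (dom n) p, minDist i (ones (dom n) g)

/-- The set of ground-truth anomaly windows hit by `p`. -/
def Dset (n : ℕ) (g p : ℕ → Bool) : Finset (ℕ × ℕ) :=
  (runs (dom n) g true).filter (fun W => ∃ i ∈ ivl W, p i = true)

/-- Delay of the first alarm of `p` within the window `W`. -/
noncomputable def delay (p : ℕ → Bool) (W : ℕ × ℕ) : ℕ :=
  sInf {i : ℕ | i ∈ ivl W ∧ p i = true} - W.1

/-- Average Alert Delay. -/
noncomputable def AAD (n : ℕ) (g p : ℕ → Bool) : ℝ :=
  (∑ W ∈ Dset n g p, (delay p W : ℝ)) / ((Dset n g p).card : ℝ)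




lemma mem_runs {A : Finset ℕ} {s : ℕ → Bool} {v : Bool} {W : ℕ × ℕ} :
    W ∈ runs A s v ↔ W.1 ∈ A ∧ W.2 ∈ A ∧ W.1 ≤ W.2 ∧ ivl W ⊆ A ∧
      (∀ i ∈ ivl W, s i = v) ∧ (W.1 - 1 ∈ A → s (W.1 - 1) ≠ v) ∧
      (W.2 + 1 ∈ A → s (W.2 + 1) ≠ v) := by
  simp [runs, Finset.mem_filter, Finset.mem_product, and_assoc]

lemma runs_congr {A : Finset ℕ} {s t : ℕ → Bool} {v : Bool}
    (h : ∀ i ∈ A, s i = t i) : runs A s v = runs A t v := by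
  ext W
  simp only [mem_runs]
  constructor
  · rintro ⟨h1, h2, h3, h4, h5, h6, h7⟩
    exact ⟨h1, h2, h3, h4, fun i hi => (h i (h4 hi)).symm.trans (h5 i hi),
      fun hm hv => h6 hm ((h _ hm).trans hv),
      fun hm hv => h7 hm ((h _ hm).trans hv)⟩
  · rintro ⟨h1, h2, h3, h4, h5, h6, h7⟩
    exact ⟨h1, h2, h3, h4, fun i hi => (h i (h4 hi)).trans (h5 i hi),
      fun hm hv => h6 hm ((h _ hm).symm.trans hv),
      fun hm hv => h7 hm ((h _ hm).symm.trans hv)⟩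

lemma ones_congr {A : Finset ℕ} {s t : ℕ → Bool}
    (h : ∀ i ∈ A, s i = t i) : ones A s = ones A t := by
  unfold ones
  exact Finset.filter_congr fun i hi => by rw [h i hi]

lemma runs_same_disjoint {n : ℕ} {g : ℕ → Bool} {v : Bool} {M N : ℕ × ℕ}
    (hM : M ∈ runs (dom n) g v) (hN : N ∈ runs (dom n) g v) (hne : M ≠ N)
    {i : ℕ} (hiM : i ∈ ivl M) (hiN : i ∈ ivl N) : False := by
  obtain ⟨_, _, hle, hsub, hval, hl, hr⟩ := mem_runs.mp hM
  obtain ⟨_, _, hle', hsub', hval', hl', hr'⟩ := mem_runs.mp hN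
  simp only [ivl, Finset.mem_Icc] at hiM hiN
  rcases lt_trichotomy M.1 N.1 with h | h | h
  · have hmem : N.1 - 1 ∈ ivl M := by
      simp only [ivl, Finset.mem_Icc]; omega
    exact hl' (hsub hmem) (hval _ hmem)
  · rcases lt_trichotomy M.2 N.2 with h2 | h2 | h2
    · have hmem : M.2 + 1 ∈ ivl N := by
        simp only [ivl, Finset.mem_Icc]; omega
      exact hr (hsub' hmem) (hval' _ hmem)
    · exact hne (Prod.ext h h2)
    · have hmem : N.2 + 1 ∈ ivl M := by
        simp only [ivl, Finset.mem_Icc]; omega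
      exact hr' (hsub hmem) (hval _ hmem)
  · have hmem : M.1 - 1 ∈ ivl N := by
      simp only [ivl, Finset.mem_Icc]; omega
    exact hl (hsub' hmem) (hval' _ hmem)




/-- LARM satisfies the Minimizing False Alarms property (Property 4). -/
theorem larm_min_false_alarms (n : ℕ) (hn : 1 ≤ n)
    (α : Finset ℕ → (ℕ → Bool) → ℝ) (β : ℕ → ℝ)
    (hα : AlphaSpec α) (hβ : BetaSpec β)
    (g p q : ℕ → Bool) (N : ℕ × ℕ) (hN : N ∈ runs (dom n) g false)
    (hpq : ∀ i ∈ dom n, i ∉ ivl N → p i = q i)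
    (hcard : (runs (ivl N) p true).card < (runs (ivl N) q true).card) :
    LARM n α β g p > LARM n α β g q := by
  -- p and q agree on every true-run of g
  have hagree_true : ∀ A ∈ runs (dom n) g true, ∀ i ∈ ivl A, p i = q i := by
    intro A hA i hi
    refine hpq i ((mem_runs.mp hA).2.2.2.1 hi) fun hiN => ?_
    have h1 : g i = true := (mem_runs.mp hA).2.2.2.2.1 i hi
    have h2 : g i = false := (mem_runs.mp hN).2.2.2.2.1 i hiN
    simp [h1] at h2
  -- p and q agree on every false-run of g other than N
  have hagree_false : ∀ M ∈ (runs (dom n) g false).erase N, ∀ i ∈ ivl M, p i = q i := by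
    intro M hM i hi
    obtain ⟨hMne, hM⟩ := Finset.mem_erase.mp hM
    exact hpq i ((mem_runs.mp hM).2.2.2.1 hi)
      (fun hiN => runs_same_disjoint hM hN hMne hi hiN)
  -- first summand equality
  have hterm1 :
      ∑ A ∈ (runs (dom n) g true).filter (fun A => 0 < (runs (ivl A) p true).card),
        (α (ivl A) p + 1) / 2 ^ ((runs (ivl A) p true).card)
      = ∑ A ∈ (runs (dom n) g true).filter (fun A => 0 < (runs (ivl A) q true).card),
        (α (ivl A) q + 1) / 2 ^ ((runs (ivl A) q true).card) := by
    have hset : (runs (dom n) g true).filter (fun A => 0 < (runs (ivl A) p true).card)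
        = (runs (dom n) g true).filter (fun A => 0 < (runs (ivl A) q true).card) :=
      Finset.filter_congr fun A hA => by rw [runs_congr (hagree_true A hA)]
    rw [hset]
    refine Finset.sum_congr rfl fun A hA => ?_
    have hA' := Finset.mem_of_mem_filter A hA
    rw [runs_congr (hagree_true A hA'), hα.restrict _ _ _ (hagree_true A hA')]
  -- split the false-run sums at N
  have hsum2p : ∑ M ∈ runs (dom n) g false, ((runs (ivl M) p true).card : ℝ)
      = ((runs (ivl N) p true).card : ℝ)
        + ∑ M ∈ (runs (dom n) g false).erase N, ((runs (ivl M) q true).card : ℝ) := by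
    rw [← Finset.add_sum_erase _ _ hN]
    congr 1
    exact Finset.sum_congr rfl fun M hM => by rw [runs_congr (hagree_false M hM)]
  have hsum2q : ∑ M ∈ runs (dom n) g false, ((runs (ivl M) q true).card : ℝ)
      = ((runs (ivl N) q true).card : ℝ)
        + ∑ M ∈ (runs (dom n) g false).erase N, ((runs (ivl M) q true).card : ℝ) := by
    rw [← Finset.add_sum_erase _ _ hN]
  have hsum3p : ∑ M ∈ runs (dom n) g false, β ((ones (ivl M) p).card)
      = β ((ones (ivl N) p).card)
        + ∑ M ∈ (runs (dom n) g false).erase N, β ((ones (ivl M) q).card) := by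
    rw [← Finset.add_sum_erase _ _ hN]
    congr 1
    exact Finset.sum_congr rfl fun M hM => by rw [ones_congr (hagree_false M hM)]
  have hsum3q : ∑ M ∈ runs (dom n) g false, β ((ones (ivl M) q).card)
      = β ((ones (ivl N) q).card)
        + ∑ M ∈ (runs (dom n) g false).erase N, β ((ones (ivl M) q).card) := by
    rw [← Finset.add_sum_erase _ _ hN]
  have hc : ((runs (ivl N) p true).card : ℝ) + 1 ≤ ((runs (ivl N) q true).card : ℝ) := by
    exact_mod_cast hcard
  have hbp : β ((ones (ivl N) p).card) ≤ 1 := (hβ.mem_Icc _).2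
  have hbq : 0 ≤ β ((ones (ivl N) q).card) := (hβ.mem_Icc _).1
  unfold LARM
  rw [hterm1, hsum2p, hsum2q, hsum3p, hsum3q]
  linarith

end TSAD
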